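/- Let θ : Fin n → ℝ be a probability vector with all θ i > 0. For any permutation π of Fin n, the sequential encoding applied in the order π (flipping Bernoulli bits with parameters θ (π k) / (1 - ∑_{m < k} θ (π m)) and outputting π k at the first true flip, or π (n-1) if none) yields a random variable C with P(C = i) = θ i for all i. -/
import Mathlib


/-- The remaining probability mass `S k = 1 - ∑_{i < k} θ i`. -/
noncomputable def remMass {n : ℕ} (θ : Fin n → ℝ) (k : ℕ) : ℝ :=
  1 - ∑ i : Fin n, if (i : ℕ) < k then θ i else 0

/-- Probability weight of an outcome `σ` of the `n - 1` independent Bernoulli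
flips, where flip `k` is true with probability `θ k / S k`. -/
noncomputable def seqWeight {n : ℕ} (θ : Fin n → ℝ) (σ : Fin (n - 1) → Bool) : ℝ :=
  ∏ j : Fin (n - 1),
    if σ j then θ (Fin.castLE (Nat.sub_le n 1) j) / remMass θ j.val
    else 1 - θ (Fin.castLE (Nat.sub_le n 1) j) / remMass θ j.val

/-- The index of the first true flip, or the default `d` if all flips are false. -/
def seqOut {m : ℕ} (σ : Fin m → Bool) (d : ℕ) : ℕ :=
  if h : ∃ k, σ k = true then
    ((Finset.univ.filter fun k => σ k = true).min'
      (by obtain ⟨k, hk⟩ := h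
          exact ⟨k, Finset.mem_filter.mpr ⟨Finset.mem_univ _, hk⟩⟩)).val
  else d

noncomputable def prefixProd {m : ℕ} (p : Fin m → ℝ) (k : ℕ) : ℝ :=
  ∏ j : Fin m, if (j : ℕ) < k then 1 - p j else 1

lemma prefixProd_zero {m : ℕ} (p : Fin m → ℝ) : prefixProd p 0 = 1 := by
  simp [prefixProd]

lemma prefixProd_cons {m : ℕ} (p : Fin (m + 1) → ℝ) (k : ℕ) :
    prefixProd p (k + 1) = (1 - p 0) * prefixProd (p ∘ Fin.succ) k := by
  unfold prefixProd
  rw [Fin.prod_univ_succ]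
  simp [Nat.succ_lt_succ_iff]

lemma prefixProd_succ {m k : ℕ} (p : Fin m → ℝ) (hk : k < m) :
    prefixProd p (k + 1) = prefixProd p k * (1 - p ⟨k, hk⟩) := by
  unfold prefixProd
  have h : ∀ j : Fin m, (if (j : ℕ) < k + 1 then 1 - p j else 1)
      = (if (j : ℕ) < k then 1 - p j else 1) * (if j = ⟨k, hk⟩ then 1 - p j else 1) := by
    intro j
    rcases lt_trichotomy (j : ℕ) k with h1 | h1 | h1
    · rw [if_pos (by omega), if_pos h1,
        if_neg (fun he => by rw [he] at h1; exact absurd h1 (lt_irrefl _))]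
      ring
    · rw [if_pos (by omega), if_neg (by omega), if_pos (Fin.ext h1)]
      ring
    · rw [if_neg (by omega), if_neg (by omega),
        if_neg (fun he => by rw [he] at h1; exact absurd h1 (lt_irrefl _))]
      ring
  rw [Finset.prod_congr rfl (fun j _ => h j), Finset.prod_mul_distrib,
    Finset.prod_ite_eq' Finset.univ (⟨k, hk⟩ : Fin m) (fun j => 1 - p j)]
  simp

lemma seqOut_cons_true {m d : ℕ} (σ : Fin m → Bool) :
    seqOut (Fin.cons true σ) d = 0 := by
  unfold seqOut
  have h : ∃ k, Fin.cons (α := fun _ => Bool) true σ k = true := ⟨0, rfl⟩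
  rw [dif_pos h]
  have h0 : (0 : Fin (m + 1)) ∈ Finset.univ.filter
      (fun k => Fin.cons (α := fun _ => Bool) true σ k = true) := by simp
  have h2 : (Finset.univ.filter
      (fun k => Fin.cons (α := fun _ => Bool) true σ k = true)).min' _ = 0 :=
    le_antisymm (Finset.min'_le _ _ h0) (Fin.zero_le _)
  rw [h2]
  rfl

lemma seqOut_cons_false {m d : ℕ} (σ : Fin m → Bool) :
    seqOut (Fin.cons false σ) (d + 1) = seqOut σ d + 1 := by
  by_cases h : ∃ k, σ k = true
  · obtain ⟨k0, hk0⟩ := h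
    have hc : ∃ k, Fin.cons (α := fun _ => Bool) false σ k = true :=
      ⟨k0.succ, by simpa using hk0⟩
    unfold seqOut
    rw [dif_pos hc, dif_pos ⟨k0, hk0⟩]
    have hne' : (Finset.univ.filter (fun k => σ k = true)).Nonempty :=
      ⟨k0, by simp [hk0]⟩
    set a := (Finset.univ.filter (fun k => σ k = true)).min' hne' with ha
    have haS : σ a = true := by
      have := Finset.min'_mem _ hne'
      simpa using this
    have key : (Finset.univ.filter
        (fun k => Fin.cons (α := fun _ => Bool) false σ k = true)).min' (by
          obtain ⟨k, hk⟩ := hc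
          exact ⟨k, Finset.mem_filter.mpr ⟨Finset.mem_univ _, hk⟩⟩) = a.succ := by
      apply le_antisymm
      · apply Finset.min'_le
        simp [haS]
      · apply Finset.le_min'
        intro y hy
        have hyS : Fin.cons (α := fun _ => Bool) false σ y = true := by
          simpa using hy
        have hy0 : y ≠ 0 := by
          intro he
          rw [he] at hyS
          simp at hyS
        obtain ⟨y', rfl⟩ := Fin.eq_succ_of_ne_zero hy0
        have hy'S : σ y' = true := by simpa using hyS
        exact Fin.succ_le_succ_iff.mpr (Finset.min'_le _ _ (by simp [hy'S]))
    rw [key]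
    simp
  · have hc : ¬∃ k, Fin.cons (α := fun _ => Bool) false σ k = true := by
      push_neg at h ⊢
      intro k
      induction k using Fin.cases with
      | zero => simp
      | succ j => simpa using h j
    unfold seqOut
    rw [dif_neg hc, dif_neg h]

lemma sum_weight_one (m : ℕ) (p : Fin m → ℝ) :
    ∑ σ : Fin m → Bool, ∏ j, (if σ j then p j else 1 - p j) = 1 := by
  classical
  have h1 := Finset.prod_univ_sum (fun _ : Fin m => (Finset.univ : Finset Bool))
    (fun j b => if b then p j else 1 - p j)
  rw [← Fintype.piFinset_univ, ← h1]
  have : ∀ j : Fin m,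
      (∑ b ∈ (Finset.univ : Finset Bool), if b then p j else 1 - p j) = 1 := by
    intro j
    rw [Fintype.sum_bool]
    simp
  rw [Finset.prod_congr rfl (fun j _ => this j)]
  simp

lemma key_sum (m : ℕ) : ∀ (p : Fin m → ℝ) (g : ℕ → ℝ),
    ∑ σ : Fin m → Bool, (∏ j, if σ j then p j else 1 - p j) * g (seqOut σ m)
    = (∑ k : Fin m, prefixProd p (k : ℕ) * p k * g (k : ℕ)) + prefixProd p m * g m := by
  induction m with
  | zero =>
    intro p g
    have : ∀ σ : Fin 0 → Bool, seqOut σ 0 = 0 := by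
      intro σ
      unfold seqOut
      rw [dif_neg (by rintro ⟨k, -⟩; exact k.elim0)]
    simp [this, prefixProd]
  | succ m ih =>
    intro p g
    rw [← Equiv.sum_comp (Fin.consEquiv (fun _ : Fin (m + 1) => Bool))
      (fun σ => (∏ j, if σ j then p j else 1 - p j) * g (seqOut σ (m + 1))),
      Fintype.sum_prod_type, Fintype.sum_bool]
    have hT : ∀ σ' : Fin m → Bool,
        (Fin.consEquiv (fun _ : Fin (m + 1) => Bool)) (true, σ') = Fin.cons true σ' :=
      fun _ => rfl
    have hF : ∀ σ' : Fin m → Bool,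
        (Fin.consEquiv (fun _ : Fin (m + 1) => Bool)) (false, σ') = Fin.cons false σ' :=
      fun _ => rfl
    have htrue : ∑ σ' : Fin m → Bool,
        (∏ j, if (Fin.cons (α := fun _ => Bool) true σ') j then p j else 1 - p j) *
          g (seqOut (Fin.cons true σ') (m + 1)) = p 0 * g 0 := by
      have h2 : ∀ σ' : Fin m → Bool,
          (∏ j, if (Fin.cons (α := fun _ => Bool) true σ') j then p j else 1 - p j) *
            g (seqOut (Fin.cons true σ') (m + 1))
          = p 0 * g 0 * ∏ j : Fin m, (if σ' j then p j.succ else 1 - p j.succ) := by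
        intro σ'
        rw [seqOut_cons_true, Fin.prod_univ_succ]
        simp only [Fin.cons_zero, Fin.cons_succ, if_true]
        ring
      rw [Finset.sum_congr rfl (fun σ' _ => h2 σ'), ← Finset.mul_sum,
        sum_weight_one m (fun j => p j.succ)]
      ring
    have hfalse : ∑ σ' : Fin m → Bool,
        (∏ j, if (Fin.cons (α := fun _ => Bool) false σ') j then p j else 1 - p j) *
          g (seqOut (Fin.cons false σ') (m + 1))
        = (1 - p 0) * ((∑ k : Fin m, prefixProd (fun j => p j.succ) (k : ℕ) * p k.succ *
            g ((k : ℕ) + 1)) + prefixProd (fun j => p j.succ) m * g (m + 1)) := by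
      have h2 : ∀ σ' : Fin m → Bool,
          (∏ j, if (Fin.cons (α := fun _ => Bool) false σ') j then p j else 1 - p j) *
            g (seqOut (Fin.cons false σ') (m + 1))
          = (1 - p 0) * ((∏ j : Fin m, (if σ' j then p j.succ else 1 - p j.succ)) *
              g (seqOut σ' m + 1)) := by
        intro σ'
        rw [seqOut_cons_false, Fin.prod_univ_succ]
        simp only [Fin.cons_zero, Fin.cons_succ, if_false, Bool.false_eq_true]
        ring
      rw [Finset.sum_congr rfl (fun σ' _ => h2 σ'), ← Finset.mul_sum,
        ih (fun j => p j.succ) (fun t => g (t + 1))]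
    simp only [hT, hF]
    rw [htrue, hfalse, Fin.sum_univ_succ]
    have h0 : prefixProd p ((0 : Fin (m + 1)) : ℕ) = 1 := prefixProd_zero p
    rw [h0]
    have hsum2 : ∑ i : Fin m, prefixProd p ((i.succ : Fin (m + 1)) : ℕ) * p i.succ *
          g ((i.succ : Fin (m + 1)) : ℕ)
        = ∑ i : Fin m, (1 - p 0) *
            (prefixProd (fun j => p j.succ) (i : ℕ) * p i.succ * g ((i : ℕ) + 1)) := by
      apply Finset.sum_congr rfl
      intro k _
      rw [Fin.val_succ, prefixProd_cons]
      have e : p ∘ Fin.succ = fun j => p j.succ := rfl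
      rw [e]
      ring
    rw [hsum2, ← Finset.mul_sum, prefixProd_cons]
    have hz : ((0 : Fin (m + 1)) : ℕ) = 0 := rfl
    rw [hz]
    have : prefixProd (p ∘ Fin.succ) m = prefixProd (fun j => p j.succ) m := rfl
    rw [this]
    ring

lemma remMass_zero {n : ℕ} (θ : Fin n → ℝ) : remMass θ 0 = 1 := by simp [remMass]

lemma remMass_succ {n : ℕ} (θ : Fin n → ℝ) {k : ℕ} (hk : k < n) :
    remMass θ (k + 1) = remMass θ k - θ ⟨k, hk⟩ := by
  unfold remMass
  have h : ∀ i : Fin n, (if (i : ℕ) < k + 1 then θ i else 0)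
      = (if (i : ℕ) < k then θ i else 0) + (if i = ⟨k, hk⟩ then θ i else 0) := by
    intro i
    rcases lt_trichotomy (i : ℕ) k with h1 | h1 | h1
    · rw [if_pos (by omega), if_pos h1,
        if_neg (fun he => by rw [he] at h1; exact absurd h1 (lt_irrefl _))]
      ring
    · rw [if_pos (by omega), if_neg (by omega), if_pos (Fin.ext h1)]
      ring
    · rw [if_neg (by omega), if_neg (by omega),
        if_neg (fun he => by rw [he] at h1; exact absurd h1 (lt_irrefl _))]
      ring
  rw [Finset.sum_congr rfl (fun i _ => h i), Finset.sum_add_distrib,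
    Finset.sum_ite_eq' Finset.univ (⟨k, hk⟩ : Fin n) θ]
  simp
  ring

lemma remMass_eq_sum {n : ℕ} (θ : Fin n → ℝ) (hsum : ∑ i, θ i = 1) (k : ℕ) :
    remMass θ k = ∑ i : Fin n, if (i : ℕ) < k then 0 else θ i := by
  unfold remMass
  rw [← hsum, ← Finset.sum_sub_distrib]
  apply Finset.sum_congr rfl
  intro i _
  by_cases h : (i : ℕ) < k <;> simp [h]

lemma remMass_pos {n : ℕ} (θ : Fin n → ℝ) (hθ : ∀ i, 0 < θ i) (hsum : ∑ i, θ i = 1)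
    {k : ℕ} (hk : k < n) : 0 < remMass θ k := by
  rw [remMass_eq_sum θ hsum]
  apply Finset.sum_pos'
  · intro i _
    by_cases h : (i : ℕ) < k <;> simp [h, (hθ i).le]
  · refine ⟨⟨k, hk⟩, Finset.mem_univ _, ?_⟩
    rw [if_neg (lt_irrefl k)]
    exact hθ _

lemma tele {n : ℕ} (θ : Fin n → ℝ) (hθ : ∀ i, 0 < θ i) (hsum : ∑ i, θ i = 1) :
    ∀ k, k ≤ n - 1 →
      prefixProd (fun j : Fin (n - 1) =>
        θ (Fin.castLE (Nat.sub_le n 1) j) / remMass θ j.val) k = remMass θ k := by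
  intro k
  induction k with
  | zero => intro _; rw [prefixProd_zero, remMass_zero]
  | succ k ihk =>
    intro hk
    have hk' : k < n - 1 := by omega
    have hkn : k < n := by omega
    rw [prefixProd_succ _ hk', ihk (by omega), remMass_succ θ hkn]
    have hpos : 0 < remMass θ k := remMass_pos θ hθ hsum hkn
    have hp : θ (Fin.castLE (Nat.sub_le n 1) ⟨k, hk'⟩) = θ ⟨k, hkn⟩ := by
      congr 1
    rw [hp]
    field_simp

/-- order-independence of the sequential categorical encoding.
For a probability vector `θ` with all entries positive and any permutation `π`
of `Fin n`, flipping Bernoulli bits with parameters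
`θ (π k) / (1 - ∑_{m < k} θ (π m))` and outputting `π k` at the first true flip
(or `π (n-1)` if none) yields `C` with `P(C = i) = θ i` for all `i`. -/
theorem stmt_14 {n : ℕ} (hn : 1 ≤ n) (θ : Fin n → ℝ) (hθ : ∀ i, 0 < θ i)
    (hsum : ∑ i, θ i = 1) (π : Equiv.Perm (Fin n)) :
    ∀ i : Fin n,
      ∑ σ : Fin (n - 1) → Bool,
        seqWeight (fun k => θ (π k)) σ *
          (if h : seqOut σ (n - 1) < n then
            (if π ⟨seqOut σ (n - 1), h⟩ = i then (1 : ℝ) else 0)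
          else 0) = θ i := by
  intro i
  set θ' : Fin n → ℝ := fun k => θ (π k) with hθ'def
  have hθ' : ∀ k, 0 < θ' k := fun k => hθ _
  have hsum' : ∑ k, θ' k = 1 := (Equiv.sum_comp π θ).trans hsum
  set p : Fin (n - 1) → ℝ := fun j =>
    θ' (Fin.castLE (Nat.sub_le n 1) j) / remMass θ' j.val with hpdef
  set t : ℕ := ((π.symm i : Fin n) : ℕ) with htdef
  set g : ℕ → ℝ := fun s => if s = t then (1 : ℝ) else 0 with hgdef
  have hout : ∀ σ : Fin (n - 1) → Bool, seqOut σ (n - 1) < n := by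
    intro σ
    unfold seqOut
    split
    · exact lt_of_lt_of_le (Fin.is_lt _) (Nat.sub_le n 1)
    · omega
  have hterm : ∀ σ : Fin (n - 1) → Bool,
      seqWeight θ' σ *
        (if h : seqOut σ (n - 1) < n then
          (if π ⟨seqOut σ (n - 1), h⟩ = i then (1 : ℝ) else 0)
        else 0)
      = (∏ j, if σ j then p j else 1 - p j) * g (seqOut σ (n - 1)) := by
    intro σ
    rw [dif_pos (hout σ)]
    have hc : (π ⟨seqOut σ (n - 1), hout σ⟩ = i) ↔ (seqOut σ (n - 1) = t) := by
      rw [Equiv.apply_eq_iff_eq_symm_apply, Fin.ext_iff]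
    congr 1
    rw [hgdef]
    simp only [hc]
  rw [Finset.sum_congr rfl (fun σ _ => hterm σ), key_sum (n - 1) p g]
  have htn : t < n := (π.symm i).isLt
  by_cases hcase : t < n - 1
  · have hmain : ∑ k : Fin (n - 1), prefixProd p (k : ℕ) * p k * g (k : ℕ)
        = remMass θ' t * p ⟨t, hcase⟩ := by
      rw [Finset.sum_eq_single (⟨t, hcase⟩ : Fin (n - 1))]
      · rw [hgdef]
        simp only [if_pos rfl]
        rw [tele θ' hθ' hsum' t (by omega)]
        simp
      · intro k _ hkne
        have : ((k : ℕ) ≠ t) := fun he => hkne (Fin.ext he)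
        rw [hgdef]
        simp only [if_neg this]
        ring
      · intro h
        exact absurd (Finset.mem_univ _) h
    rw [hmain]
    have hg2 : g (n - 1) = 0 := by
      rw [hgdef]
      simp only [if_neg (by omega : ¬(n - 1 = t))]
    rw [hg2, mul_zero, add_zero]
    have hp : p ⟨t, hcase⟩ = θ' ⟨t, htn⟩ / remMass θ' t := by
      rw [hpdef]
      congr 1
    rw [hp]
    have hpos : 0 < remMass θ' t := remMass_pos θ' hθ' hsum' htn
    rw [mul_div_cancel₀ _ (ne_of_gt hpos)]
    have : (⟨t, htn⟩ : Fin n) = π.symm i := Fin.ext rfl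
    rw [hθ'def] at *
    rw [this]
    simp
  · have ht : t = n - 1 := by omega
    have hzero : ∑ k : Fin (n - 1), prefixProd p (k : ℕ) * p k * g (k : ℕ) = 0 := by
      apply Finset.sum_eq_zero
      intro k _
      have : ((k : ℕ) ≠ t) := by have := k.isLt; omega
      rw [hgdef]
      simp only [if_neg this]
      ring
    rw [hzero, zero_add]
    have hg1 : g (n - 1) = 1 := by
      rw [hgdef]
      simp only [if_pos ht.symm]
    rw [hg1, mul_one, tele θ' hθ' hsum' (n - 1) le_rfl]
    have hlast : remMass θ' (n - 1) = θ' ⟨n - 1, by omega⟩ := by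
      rw [remMass_eq_sum θ' hsum']
      rw [Finset.sum_eq_single (⟨n - 1, by omega⟩ : Fin n)]
      · rw [if_neg (lt_irrefl _)]
      · intro b _ hbne
        have hb : (b : ℕ) < n - 1 := by
          have h1 := b.isLt
          have : (b : ℕ) ≠ n - 1 := fun he => hbne (Fin.ext he)
          omega
        rw [if_pos hb]
      · intro h
        exact absurd (Finset.mem_univ _) h
    rw [hlast]
    have : (⟨n - 1, by omega⟩ : Fin n) = π.symm i := Fin.ext ht.symm
    rw [hθ'def, this]
    simp
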